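/- arXiv:gr-qc/0202087 — 2 statements merged into one kernel-verified Lean document; each statement's English description precedes it below -/
import Mathlib

section
/- Let σ₀, σ₁ ∈ ℝ with σ₁ ≠ 0 and ε ∈ {-1,0,1}. Consider the Riemannian metric on the surface S given in coordinates (θ, φ), θ ∈ (0,π), φ ∈ (0,2π), by ds² = (Σ²/(1 − σ₀² sin²θ)) dθ² + Σ² sin²θ dφ², where Σ = Σ(θ) := 2σ₁ P(θ)/(P(θ)² + ε σ₁²) with P(θ) = σ₀ cos θ + √(1 − σ₀² sin²θ), assumed positive with 1 − σ₀² sin²θ > 0 on the domain. Then the scalar curvature of this metric is constant, equal to R = [(1+σ₀)² + ε σ₁²][(1−σ₀)² + ε σ₁²]/(2σ₁²). -/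
/-!
Write `Q = √(1 - σ₀² sin²θ)` and `A = εσ₁²`. Then `P' = -σ₀ sin θ · P / Q`, so `S'/S` is an explicit
multiple of `sin θ / Q`, and `G'/√(EG)` takes the closed form
`2 Q cos θ + 2 σ₀ sin²θ (P² - A)/(P² + A)`. Differentiating once more and dividing by
`√(EG) = S² sin θ / Q`, the `θ`-dependence cancels by a polynomial identity modulo
`sin²θ + cos²θ = 1` and `Q² = 1 - σ₀² sin²θ`, which rests on `P (σ₀ cos θ - Q) = σ₀² - 1`.
-/

open Real Set

theorem hasDerivAt_sqrt_one_sub_sq_mul_sin_sq {a θ : ℝ} (h : 0 < 1 - a ^ 2 * sin θ ^ 2) :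
    HasDerivAt (fun x => √(1 - a ^ 2 * sin x ^ 2))
      (-(a ^ 2 * sin θ * cos θ) / √(1 - a ^ 2 * sin θ ^ 2)) θ := by
  refine ((((hasDerivAt_sin θ).fun_pow 2).const_mul (a ^ 2)).const_sub 1
    |>.sqrt h.ne').congr_deriv ?_
  push_cast
  ring

theorem hasDerivAt_mul_cos_add_sqrt {a θ : ℝ} (h : 0 < 1 - a ^ 2 * sin θ ^ 2) :
    HasDerivAt (fun x => a * cos x + √(1 - a ^ 2 * sin x ^ 2))
      (-(a * sin θ * (a * cos θ + √(1 - a ^ 2 * sin θ ^ 2))) / √(1 - a ^ 2 * sin θ ^ 2)) θ := by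
  have hQ : √(1 - a ^ 2 * sin θ ^ 2) ≠ 0 := (sqrt_pos.2 h).ne'
  refine (((hasDerivAt_cos θ).const_mul a).fun_add
    (hasDerivAt_sqrt_one_sub_sq_mul_sin_sq h)).congr_deriv ?_
  field_simp
  ring

theorem HasDerivAt.mul_div_sq_add {P : ℝ → ℝ} {p c A θ : ℝ} (hP : HasDerivAt P p θ)
    (hD : P θ ^ 2 + A ≠ 0) :
    HasDerivAt (fun x => c * P x / (P x ^ 2 + A)) (c * p * (A - P θ ^ 2) / (P θ ^ 2 + A) ^ 2) θ := by
  refine ((hP.const_mul c).fun_div ((hP.fun_pow 2).add_const A) hD).congr_deriv ?_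
  push_cast
  ring

theorem HasDerivAt.sq_sub_div_sq_add {P : ℝ → ℝ} {p A θ : ℝ} (hP : HasDerivAt P p θ)
    (hD : P θ ^ 2 + A ≠ 0) :
    HasDerivAt (fun x => (P x ^ 2 - A) / (P x ^ 2 + A)) (4 * A * P θ * p / (P θ ^ 2 + A) ^ 2) θ := by
  refine (((hP.fun_pow 2).sub_const A).fun_div ((hP.fun_pow 2).add_const A) hD).congr_deriv ?_
  push_cast
  ring

theorem sqrt_sq_div_mul_sq_mul_sq (x y w : ℝ) (hy : 0 ≤ y) (hw : 0 ≤ w) :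
    √(x ^ 2 / w * (x ^ 2 * y ^ 2)) = x ^ 2 * y / √w := by
  rw [← sqrt_sq (by positivity : 0 ≤ x ^ 2 * y / √w), div_pow, sq_sqrt hw]
  ring_nf

theorem deriv_sq_mul_sin_sq_div_sqrt {S : ℝ → ℝ} {s w θ : ℝ} (hS : HasDerivAt S s θ)
    (hS0 : S θ ≠ 0) (hw : 0 < w) (hsin : 0 < sin θ) :
    deriv (fun x => S x ^ 2 * sin x ^ 2) θ / √(S θ ^ 2 / w * (S θ ^ 2 * sin θ ^ 2)) =
      2 * √w * (s / S θ * sin θ + cos θ) := by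
  have hw' : √w ≠ 0 := (sqrt_pos.2 hw).ne'
  rw [((hS.fun_pow 2).fun_mul ((hasDerivAt_sin θ).fun_pow 2)).deriv,
    sqrt_sq_div_mul_sq_mul_sq _ _ _ hsin.le hw.le]
  field_simp
  push_cast
  ring

theorem curvature_identity (σ₀ A c s Q : ℝ) (hs : s ^ 2 + c ^ 2 = 1)
    (hQ : Q ^ 2 = 1 - σ₀ ^ 2 * s ^ 2) :
    (σ₀ ^ 2 * c ^ 2 + Q ^ 2) * ((σ₀ * c + Q) ^ 2 + A) ^ 2
        - 2 * σ₀ * c * Q * ((σ₀ * c + Q) ^ 2 - A) * ((σ₀ * c + Q) ^ 2 + A)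
        + 4 * A * σ₀ ^ 2 * s ^ 2 * (σ₀ * c + Q) ^ 2 =
      (σ₀ * c + Q) ^ 2 * (((1 + σ₀) ^ 2 + A) * ((1 - σ₀) ^ 2 + A)) := by
  linear_combination
    (σ₀ * c + Q) ^ 2 * ((σ₀ ^ 2 * c ^ 2 - Q ^ 2 + σ₀ ^ 2 - 1) * σ₀ ^ 2 + 2 * A * σ₀ ^ 2) * hs
      + (σ₀ * c + Q) ^ 2 * (2 * A - (σ₀ ^ 2 * c ^ 2 - Q ^ 2 + σ₀ ^ 2 - 1)) * hQ

/-- The function differentiated here is `G'/√(EG) = 2 d√G/ds`, with `s` the arclength along a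
meridian; its derivative is `-R √(EG)`. -/
theorem hasDerivAt_meridian_slope {Q P : ℝ → ℝ} {σ₀ A θ : ℝ}
    (hQ : HasDerivAt Q (-(σ₀ ^ 2 * sin θ * cos θ) / Q θ) θ)
    (hP : HasDerivAt P (-(σ₀ * sin θ * P θ) / Q θ) θ)
    (hQsq : Q θ ^ 2 = 1 - σ₀ ^ 2 * sin θ ^ 2) (hPQ : P θ = σ₀ * cos θ + Q θ) (hQ0 : Q θ ≠ 0)
    (hD : P θ ^ 2 + A ≠ 0) :
    HasDerivAt (fun x => 2 * Q x * cos x + 2 * σ₀ * sin x ^ 2 * ((P x ^ 2 - A) / (P x ^ 2 + A)))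
      (-(2 * sin θ * P θ ^ 2 * (((1 + σ₀) ^ 2 + A) * ((1 - σ₀) ^ 2 + A)) /
        (Q θ * (P θ ^ 2 + A) ^ 2))) θ := by
  refine (((hQ.const_mul 2).fun_mul (hasDerivAt_cos θ)).fun_add
    ((((hasDerivAt_sin θ).fun_pow 2).const_mul (2 * σ₀)).fun_mul
      (hP.sq_sub_div_sq_add hD))).congr_deriv ?_
  have key := curvature_identity σ₀ A (cos θ) (sin θ) (Q θ) (sin_sq_add_cos_sq θ) hQsq
  rw [← hPQ] at key
  field_simp
  linear_combination (-sin θ) * key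

theorem two_mul_mul_div_sq_add_ne_zero_iff {c p A : ℝ} :
    2 * c * p / (p ^ 2 + A) ≠ 0 ↔ c ≠ 0 ∧ p ≠ 0 ∧ p ^ 2 + A ≠ 0 := by
  simp [not_or, and_assoc]

theorem deriv_div_sqrt_eq_meridian_slope {P S E G : ℝ → ℝ} {σ₀ σ₁ A θ : ℝ}
    (hS : S = fun θ => 2 * σ₁ * P θ / (P θ ^ 2 + A))
    (hE : E = fun θ => S θ ^ 2 / (1 - σ₀ ^ 2 * sin θ ^ 2))
    (hG : G = fun θ => S θ ^ 2 * sin θ ^ 2)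
    (hP : HasDerivAt P (-(σ₀ * sin θ * P θ) / √(1 - σ₀ ^ 2 * sin θ ^ 2)) θ)
    (hw : 0 < 1 - σ₀ ^ 2 * sin θ ^ 2) (hsin : 0 < sin θ) (hS0 : S θ ≠ 0) :
    deriv G θ / √(E θ * G θ) =
      2 * √(1 - σ₀ ^ 2 * sin θ ^ 2) * cos θ +
        2 * σ₀ * sin θ ^ 2 * ((P θ ^ 2 - A) / (P θ ^ 2 + A)) := by
  obtain ⟨hσ₁, hP0, hD⟩ := two_mul_mul_div_sq_add_ne_zero_iff.1 (hS ▸ hS0)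
  subst hE hG
  rw [deriv_sq_mul_sin_sq_div_sqrt (hS ▸ hP.mul_div_sq_add hD) hS0 hw hsin, hS]
  have hQ0 : √(1 - σ₀ ^ 2 * sin θ ^ 2) ≠ 0 := (sqrt_pos.2 hw).ne'
  field_simp
  ring

theorem scalar_curvature_constant_general (ε σ₀ σ₁ : ℝ)
    (P S E G : ℝ → ℝ)
    (hP : P = fun θ => σ₀ * Real.cos θ + Real.sqrt (1 - σ₀ ^ 2 * Real.sin θ ^ 2))
    (hS : S = fun θ => 2 * σ₁ * P θ / (P θ ^ 2 + ε * σ₁ ^ 2))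
    (hE : E = fun θ => (S θ) ^ 2 / (1 - σ₀ ^ 2 * Real.sin θ ^ 2))
    (hG : G = fun θ => (S θ) ^ 2 * Real.sin θ ^ 2)
    (hpos : ∀ θ ∈ Set.Ioo (0 : ℝ) Real.pi,
      0 < S θ ∧ 0 < 1 - σ₀ ^ 2 * Real.sin θ ^ 2) :
    ∀ θ ∈ Set.Ioo (0 : ℝ) Real.pi,
      -(1 / Real.sqrt (E θ * G θ)) *
          deriv (fun θ' => deriv G θ' / Real.sqrt (E θ' * G θ')) θ =
        ((1 + σ₀) ^ 2 + ε * σ₁ ^ 2) * ((1 - σ₀) ^ 2 + ε * σ₁ ^ 2) /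
          (2 * σ₁ ^ 2) := by
  have hPd : ∀ θ ∈ Ioo 0 π,
      HasDerivAt P (-(σ₀ * sin θ * P θ) / √(1 - σ₀ ^ 2 * sin θ ^ 2)) θ := fun θ hθ => by
    subst hP; exact hasDerivAt_mul_cos_add_sqrt (hpos θ hθ).2
  have hslope : ∀ θ ∈ Ioo 0 π, deriv G θ / √(E θ * G θ) =
      2 * √(1 - σ₀ ^ 2 * sin θ ^ 2) * cos θ +
        2 * σ₀ * sin θ ^ 2 * ((P θ ^ 2 - ε * σ₁ ^ 2) / (P θ ^ 2 + ε * σ₁ ^ 2)) :=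
    fun θ hθ => deriv_div_sqrt_eq_meridian_slope hS hE hG (hPd θ hθ) (hpos θ hθ).2
      (sin_pos_of_pos_of_lt_pi hθ.1 hθ.2) (hpos θ hθ).1.ne'
  intro θ hθ
  obtain ⟨hS0, hw⟩ := hpos θ hθ
  have hsin := sin_pos_of_pos_of_lt_pi hθ.1 hθ.2
  have hQ0 : √(1 - σ₀ ^ 2 * sin θ ^ 2) ≠ 0 := (sqrt_pos.2 hw).ne'
  obtain ⟨hσ₁, hP0, hD⟩ := two_mul_mul_div_sq_add_ne_zero_iff.1 (hS ▸ hS0.ne')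
  have hderiv := (hasDerivAt_meridian_slope (hasDerivAt_sqrt_one_sub_sq_mul_sin_sq hw) (hPd θ hθ)
    (sq_sqrt hw.le) (by rw [hP]) hQ0 hD).congr_of_eventuallyEq
      (Filter.eventually_of_mem (isOpen_Ioo.mem_nhds hθ) hslope)
  have hEG : √(E θ * G θ) = S θ ^ 2 * sin θ / √(1 - σ₀ ^ 2 * sin θ ^ 2) := by
    subst hE hG; exact sqrt_sq_div_mul_sq_mul_sq _ _ _ hsin.le hw.le
  rw [hderiv.deriv, hEG, show S θ = 2 * σ₁ * P θ / (P θ ^ 2 + ε * σ₁ ^ 2) by rw [hS]]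
  generalize √(1 - σ₀ ^ 2 * sin θ ^ 2) = Q at hQ0 ⊢
  generalize P θ ^ 2 + ε * σ₁ ^ 2 = D at hD ⊢
  field_simp

/-- The scalar curvature of the induced metric
ds² = (S²/(1−σ₀²sin²θ)) dθ² + S² sin²θ dφ² on the matching two-surface is the
constant [(1+σ₀)² + εσ₁²][(1−σ₀)² + εσ₁²]/(2σ₁²).  Here, for a metric
E(θ)dθ² + G(θ)dφ², the scalar curvature is
R = 2K = −(1/√(EG)) d/dθ ( G' / √(EG) ). -/
theorem scalar_curvature_constant (ε σ₀ σ₁ : ℝ) (hε : ε ∈ ({-1, 0, 1} : Set ℝ))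
    (hσ₁ : σ₁ ≠ 0)
    (P S E G : ℝ → ℝ)
    (hP : P = fun θ => σ₀ * Real.cos θ + Real.sqrt (1 - σ₀ ^ 2 * Real.sin θ ^ 2))
    (hS : S = fun θ => 2 * σ₁ * P θ / (P θ ^ 2 + ε * σ₁ ^ 2))
    (hE : E = fun θ => (S θ) ^ 2 / (1 - σ₀ ^ 2 * Real.sin θ ^ 2))
    (hG : G = fun θ => (S θ) ^ 2 * Real.sin θ ^ 2)
    (hpos : ∀ θ ∈ Set.Ioo (0 : ℝ) Real.pi,
      0 < S θ ∧ 0 < 1 - σ₀ ^ 2 * Real.sin θ ^ 2) :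
    ∀ θ ∈ Set.Ioo (0 : ℝ) Real.pi,
      -(1 / Real.sqrt (E θ * G θ)) *
          deriv (fun θ' => deriv G θ' / Real.sqrt (E θ' * G θ')) θ =
        ((1 + σ₀) ^ 2 + ε * σ₁ ^ 2) * ((1 - σ₀) ^ 2 + ε * σ₁ ^ 2) /
          (2 * σ₁ ^ 2) :=
  scalar_curvature_constant_general ε σ₀ σ₁ P S E G hP hS hE hG hpos
end

section
/- Suppose ρ^{FL} + p^{FL} = 2(a_{,t}² + ε − a a_{,tt})/a² is nowhere zero, Σ_{,r}² − a_{,t}²Σ² > 0, a_{,t} Σ + a Σ_{,r}(r_{,t} + f cos θ) ≠ 0 and Σ_{,r} + a a_{,t} Σ(r_{,t} + f cos θ) ≠ 0 along the matching hypersurface. Then the quantity ρ + p_r defined by (ρ+p_r) = a (ρ+p)^{FL} (Σ_{,r}² − a_{,t}²Σ²)(f cos θ + r_{,t}) / ([a_{,t}Σ + aΣ_{,r}(r_{,t} + f cosθ)][Σ_{,r} + a a_{,t}Σ(r_{,t} + f cosθ)]) vanishes identically in θ ∈ (0,π) for each t if and only if f(t) = 0 and r_{,t}(t) = 0. -/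
noncomputable def Sig (ε : ℝ) (r : ℝ) : ℝ :=
  if ε = -1 then Real.sinh r else if ε = 0 then r else Real.sin r

/-- ρ + p_r vanishes for all θ on the boundary iff the matching two-sphere is
comoving: f(t) = 0 and r_{,t}(t) = 0. -/
theorem rho_plus_pr_zero_iff_comoving (ε : ℝ) (hε : ε ∈ ({-1, 0, 1} : Set ℝ))
    (a r f : ℝ → ℝ) (ha : ContDiff ℝ (⊤ : ℕ∞) a) (hr : ContDiff ℝ (⊤ : ℕ∞) r) (t : ℝ)
    (hapos : 0 < a t)
    (S S' : ℝ) (hS : S = Sig ε (r t)) (hS' : S' = deriv (Sig ε) (r t))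
    (ρppFL : ℝ) (hρpp : ρppFL = 2 * ((deriv a t) ^ 2 + ε - a t * deriv (deriv a) t) / (a t) ^ 2)
    (hρppne : ρppFL ≠ 0)
    (hnt : S' ^ 2 - (deriv a t) ^ 2 * S ^ 2 > 0)
    (hden1 : ∀ θ ∈ Set.Ioo (0 : ℝ) Real.pi,
      deriv a t * S + a t * S' * (deriv r t + f t * Real.cos θ) ≠ 0)
    (hden2 : ∀ θ ∈ Set.Ioo (0 : ℝ) Real.pi,
      S' + a t * deriv a t * S * (deriv r t + f t * Real.cos θ) ≠ 0) :
    (∀ θ ∈ Set.Ioo (0 : ℝ) Real.pi,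
        a t * ρppFL * (S' ^ 2 - (deriv a t) ^ 2 * S ^ 2) *
            (f t * Real.cos θ + deriv r t) /
          ((deriv a t * S + a t * S' * (deriv r t + f t * Real.cos θ)) *
            (S' + a t * deriv a t * S * (deriv r t + f t * Real.cos θ))) = 0) ↔
      f t = 0 ∧ deriv r t = 0 := by
  have key : ∀ θ ∈ Set.Ioo (0 : ℝ) Real.pi,
      (a t * ρppFL * (S' ^ 2 - (deriv a t) ^ 2 * S ^ 2) *
            (f t * Real.cos θ + deriv r t) /
          ((deriv a t * S + a t * S' * (deriv r t + f t * Real.cos θ)) *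
            (S' + a t * deriv a t * S * (deriv r t + f t * Real.cos θ))) = 0) ↔
      f t * Real.cos θ + deriv r t = 0 := by
    intro θ hθ
    rw [div_eq_zero_iff]
    constructor
    · rintro (h | h)
      · rcases mul_eq_zero.1 h with h | h
        · rcases mul_eq_zero.1 h with h | h
          · rcases mul_eq_zero.1 h with h | h
            · exact absurd h (ne_of_gt hapos)
            · exact absurd h hρppne
          · exact absurd h (ne_of_gt hnt)
        · exact h
      · exact absurd h (mul_ne_zero (hden1 θ hθ) (hden2 θ hθ))
    · intro h
      left; rw [h, mul_zero]
  constructor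
  · intro h
    have hpi := Real.pi_pos
    have h1 : (Real.pi / 2) ∈ Set.Ioo (0 : ℝ) Real.pi := ⟨by linarith, by linarith⟩
    have h2 : (Real.pi / 3) ∈ Set.Ioo (0 : ℝ) Real.pi := ⟨by linarith, by linarith⟩
    have e1 := (key _ h1).1 (h _ h1)
    have e2 := (key _ h2).1 (h _ h2)
    rw [Real.cos_pi_div_two] at e1
    rw [Real.cos_pi_div_three] at e2
    constructor <;> nlinarith
  · rintro ⟨hf, hr'⟩ θ hθ
    rw [key θ hθ, hf, hr']
    ring
end
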